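/- Let A be a cocommutative Hopf algebra over a field K and X, Y ⊆ A normal Hopf subalgebras. Let [X,Y] be the subalgebra of A generated by all elements {x,y} = x₁ y₁ S(x₂) S(y₂) for x ∈ X, y ∈ Y. Then [X,Y] is a subcoalgebra of A: Δ({x,y}) ∈ [X,Y] ⊗ [X,Y] for every generator, so [X,Y] is a sub-bialgebra. -/

import Mathlib

open TensorProduct Coalgebra

/-- A coalgebra is cocommutative if the comultiplication is invariant under the
switch map. -/
def IsCocomm (K A : Type*) [CommSemiring K] [AddCommMonoid A] [Module K A]
    [Coalgebra K A] : Prop :=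
  (TensorProduct.comm K A A).toLinearMap ∘ₗ (Coalgebra.comul (R := K) (A := A)) =
    Coalgebra.comul

/-- The linear map sending `a ⊗ b` to the Sweedler sum `a₁ * b * S(a₂)`
(the adjoint action of a Hopf algebra on itself). -/
noncomputable def adAct (K A : Type*) [CommSemiring K] [Semiring A] [HopfAlgebra K A] :
    A ⊗[K] A →ₗ[K] A :=
  (LinearMap.mul' K A) ∘ₗ
    (LinearMap.lTensor A ((LinearMap.mul' K A) ∘ₗ
      (TensorProduct.comm K A A).toLinearMap ∘ₗ
      (LinearMap.rTensor A (HopfAlgebra.antipode (R := K) (A := A))))) ∘ₗ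
    (TensorProduct.assoc K A A A).toLinearMap ∘ₗ
    (LinearMap.rTensor A (Coalgebra.comul (R := K) (A := A)))

/-- The linear map sending `x ⊗ y` to the Sweedler sum
`x₁ * y₁ * S(x₂) * S(y₂)` (the "Hopf commutator" `{x, y}`). -/
noncomputable def hopfComm (K A : Type*) [CommSemiring K] [Semiring A] [HopfAlgebra K A] :
    A ⊗[K] A →ₗ[K] A :=
  (LinearMap.mul' K A) ∘ₗ
    (TensorProduct.map (LinearMap.mul' K A)
      ((LinearMap.mul' K A) ∘ₗ
        TensorProduct.map (HopfAlgebra.antipode (R := K) (A := A))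
          (HopfAlgebra.antipode (R := K) (A := A)))) ∘ₗ
    (TensorProduct.tensorTensorTensorComm K A A A A).toLinearMap ∘ₗ
    (TensorProduct.map (Coalgebra.comul (R := K)) (Coalgebra.comul (R := K)))

/-- The commutator subalgebra `[X,Y]`: the subalgebra of `A` generated by the
Hopf commutators `{x,y} = x₁ y₁ S(x₂) S(y₂)` for `x ∈ X`, `y ∈ Y`. -/
noncomputable def hopfCommutator {K A : Type*} [Field K] [Ring A] [HopfAlgebra K A]
    (X Y : Subalgebra K A) : Subalgebra K A :=
  Algebra.adjoin K {z : A | ∃ x ∈ X, ∃ y ∈ Y, z = hopfComm K A (x ⊗ₜ[K] y)}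

/-!
In a cocommutative Hopf algebra the comultiplication is a bialgebra map, and bialgebra maps
between Hopf algebras intertwine the antipodes; hence `Δ ∘ S = (S ⊗ S) ∘ Δ`, i.e. `S` is a
coalgebra map. Then `{x, y} = μ ((x₁ ⊗ S x₂) * (y₁ ⊗ S y₂))` is a composite of coalgebra maps
`A ⊗ A → A`, so `Δ {x, y} = {x₁, y₁} ⊗ {x₂, y₂}`. If `Δ x ∈ X ⊗ X` and `Δ y ∈ Y ⊗ Y`, both tensor
factors on the right are generators of `[X, Y]`.
-/

open WithConv HopfAlgebra in
theorem BialgHom.comp_antipode {R A B : Type*} [CommSemiring R] [Semiring A] [Semiring B]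
    [HopfAlgebra R A] [HopfAlgebra R B] (f : A →ₐc[R] B) :
    (f : A →ₗ[R] B) ∘ₗ antipode R = antipode R ∘ₗ (f : A →ₗ[R] B) := by
  have hl : toConv ((f : A →ₗ[R] B) ∘ₗ antipode R) * toConv (f : A →ₗ[R] B) = 1 := by
    ext a
    simp [(ℛ R a).convMul_apply, ← map_mul, ← map_sum, sum_antipode_mul_eq_algebraMap_counit,
      AlgHomClass.commutes]
  have hr : toConv (f : A →ₗ[R] B) * toConv (antipode R ∘ₗ (f : A →ₗ[R] B)) = 1 := by
    ext a
    rw [(ℛ R a).convMul_apply]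
    simpa using sum_mul_antipode_eq_algebraMap_counit ((ℛ R a).induced f)
  exact toConv_injective (left_inv_eq_right_inv hl hr)

@[simp] lemma Coalgebra.coe_comulCoalgHom {R C : Type*} [CommSemiring R] [AddCommMonoid C]
    [Module R C] [Coalgebra R C] [Coalgebra.IsCocomm R C] :
    ⇑(comulCoalgHom R C) = comul := rfl

namespace HopfAlgebra

variable {R A : Type*} [CommSemiring R] [Semiring A] [HopfAlgebra R A] [Coalgebra.IsCocomm R A]

theorem comul_comp_antipode :
    comul ∘ₗ antipode R = TensorProduct.map (antipode R) (antipode R) ∘ₗ comul (A := A) :=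
  BialgHom.comp_antipode (Bialgebra.comulBialgHom R A)

variable (R A) in
noncomputable def antipodeCoalgHom : A →ₗc[R] A where
  __ := antipode R
  counit_comp := counit_comp_antipode
  map_comp_comul := comul_comp_antipode.symm

@[simp] lemma coe_antipodeCoalgHom : ⇑(antipodeCoalgHom R A) = antipode R := rfl

end HopfAlgebra

section Cocommutative

variable (R A : Type*) [CommSemiring R] [Semiring A] [HopfAlgebra R A] [Coalgebra.IsCocomm R A]

noncomputable def hopfCommCoalgHom : A ⊗[R] A →ₗc[R] A :=
  let g : A →ₗc[R] A ⊗[R] A :=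
    (Coalgebra.TensorProduct.map (CoalgHom.id R A) (HopfAlgebra.antipodeCoalgHom R A)).comp
      (comulCoalgHom R A)
  (Bialgebra.mulCoalgHom R A).comp
    ((Bialgebra.mulCoalgHom R (A ⊗[R] A)).comp (Coalgebra.TensorProduct.map g g))

theorem toLinearMap_hopfCommCoalgHom :
    (hopfCommCoalgHom R A : A ⊗[R] A →ₗ[R] A) = hopfComm R A := by
  ext x y
  simp [hopfCommCoalgHom, hopfComm, ← (ℛ R x).eq, ← (ℛ R y).eq, TensorProduct.sum_tmul,
    TensorProduct.tmul_sum]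

variable {R A}

theorem comul_hopfComm (z : A ⊗[R] A) :
    comul (hopfComm R A z) = TensorProduct.map (hopfComm R A) (hopfComm R A) (comul z) := by
  rw [← toLinearMap_hopfCommCoalgHom]
  exact (CoalgHomClass.map_comp_comul_apply (hopfCommCoalgHom R A) z).symm

end Cocommutative

theorem range_hopfComm_comp_mapIncl_le {K A : Type*} [Field K] [Ring A] [HopfAlgebra K A]
    (X Y : Subalgebra K A) :
    LinearMap.range (hopfComm K A ∘ₗ TensorProduct.mapIncl X.toSubmodule Y.toSubmodule) ≤
      (hopfCommutator X Y).toSubmodule := by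
  rintro _ ⟨w, rfl⟩
  induction w using TensorProduct.induction_on with
  | zero => simp
  | tmul x y => exact Algebra.subset_adjoin ⟨x, x.2, y, y.2, rfl⟩
  | add u v hu hv => rw [map_add]; exact add_mem hu hv

theorem hopfCommutator_subcoalgebra_general
    {K A : Type*} [Field K] [Ring A] [HopfAlgebra K A] (hA : _root_.IsCocomm K A)
    (X Y : Subalgebra K A)
    (hX_comul : ∀ x ∈ X, Coalgebra.comul (R := K) x ∈
      LinearMap.range (TensorProduct.map X.toSubmodule.subtype X.toSubmodule.subtype))
    (hY_comul : ∀ y ∈ Y, Coalgebra.comul (R := K) y ∈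
      LinearMap.range (TensorProduct.map Y.toSubmodule.subtype Y.toSubmodule.subtype)) :
    ∀ x ∈ X, ∀ y ∈ Y,
      Coalgebra.comul (R := K) (hopfComm K A (x ⊗ₜ[K] y)) ∈
        LinearMap.range (TensorProduct.map
          (hopfCommutator X Y).toSubmodule.subtype
          (hopfCommutator X Y).toSubmodule.subtype) := by
  have : Coalgebra.IsCocomm K A := ⟨hA⟩
  intro x hx y hy
  obtain ⟨t, ht⟩ := hX_comul x hx
  obtain ⟨s, hs⟩ := hY_comul y hy
  have hcomul : comul (x ⊗ₜ[K] y) = TensorProduct.map (mapIncl X.toSubmodule Y.toSubmodule)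
      (mapIncl X.toSubmodule Y.toSubmodule) (tensorTensorTensorComm K _ _ _ _ (t ⊗ₜ s)) := by
    rw [TensorProduct.comul_tmul, AlgebraTensorModule.tensorTensorTensorComm_eq, ← ht, ← hs,
      ← TensorProduct.map_tmul]
    exact LinearMap.congr_fun (tensorTensorTensorComm_comp_map K _ _ _ _) _
  have hgen := range_hopfComm_comp_mapIncl_le X Y
  rw [← Submodule.range_subtype (hopfCommutator X Y).toSubmodule] at hgen
  rw [comul_hopfComm, hcomul, TensorProduct.map_map]
  exact range_map_mono hgen hgen ⟨_, rfl⟩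

/-- The commutator subalgebra `[X,Y]` of two normal Hopf subalgebras is a
subcoalgebra: `Δ({x,y}) ∈ [X,Y] ⊗ [X,Y]` for every generator. -/
theorem hopfCommutator_subcoalgebra
    {K A : Type*} [Field K] [Ring A] [HopfAlgebra K A] (hA : _root_.IsCocomm K A)
    (X Y : Subalgebra K A)
    (hX_comul : ∀ x ∈ X, Coalgebra.comul (R := K) x ∈
      LinearMap.range (TensorProduct.map X.toSubmodule.subtype X.toSubmodule.subtype))
    (hX_antipode : ∀ x ∈ X, HopfAlgebra.antipode (R := K) x ∈ X)
    (hX_normal : ∀ (a : A), ∀ x ∈ X, adAct K A (a ⊗ₜ[K] x) ∈ X)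
    (hY_comul : ∀ y ∈ Y, Coalgebra.comul (R := K) y ∈
      LinearMap.range (TensorProduct.map Y.toSubmodule.subtype Y.toSubmodule.subtype))
    (hY_antipode : ∀ y ∈ Y, HopfAlgebra.antipode (R := K) y ∈ Y)
    (hY_normal : ∀ (a : A), ∀ y ∈ Y, adAct K A (a ⊗ₜ[K] y) ∈ Y) :
    ∀ x ∈ X, ∀ y ∈ Y,
      Coalgebra.comul (R := K) (hopfComm K A (x ⊗ₜ[K] y)) ∈
        LinearMap.range (TensorProduct.map
          (hopfCommutator X Y).toSubmodule.subtype
          (hopfCommutator X Y).toSubmodule.subtype) :=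
  hopfCommutator_subcoalgebra_general hA X Y hX_comul hY_comul
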